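/- arXiv:1412.2711 — 9 statements merged into one kernel-verified Lean document; each statement's English description precedes it below -/
import Mathlib

section
/- Potential theorem (sufficiency direction for finite weighted digraphs): Let V be a finite set of vertices and l : V × V → ℝ an edge-length function on a complete digraph. If every directed cycle has nonnegative total length (i.e., for every finite sequence v_0, v_1, ..., v_m with v_m = v_0, the sum of l(v_i, v_{i+1}) over i is nonnegative), then there exists a potential function p : V → ℝ such that l(a,b) ≥ p(b) − p(a) for all a, b ∈ V. -/
theorem potential_theorem_sufficiency
    {V : Type*} [Fintype V] [Nonempty V] (l : V → V → ℝ)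
    (hcyc : ∀ (m : ℕ) (c : Fin (m + 1) → V), c 0 = c (Fin.last m) →
      0 ≤ ∑ i : Fin m, l (c i.castSucc) (c i.succ)) :
    ∃ p : V → ℝ, ∀ a b : V, p b - p a ≤ l a b := by
  classical
  -- S v : set of lengths of walks ending at v
  set S : V → Set ℝ := fun v => {x : ℝ | ∃ m : ℕ, ∃ c : Fin (m + 1) → V,
    c (Fin.last m) = v ∧ x = ∑ i : Fin m, l (c i.castSucc) (c i.succ)} with hS
  have hne : ∀ v, (S v).Nonempty := by
    intro v
    exact ⟨0, 0, fun _ => v, rfl, by simp⟩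
  -- snoc sum lemma
  have hsnoc : ∀ (m : ℕ) (c : Fin (m + 1) → V) (b : V),
      ∑ i : Fin (m + 1), l ((Fin.snoc c b : Fin (m+2) → V) i.castSucc)
        ((Fin.snoc c b : Fin (m+2) → V) i.succ)
      = (∑ i : Fin m, l (c i.castSucc) (c i.succ)) + l (c (Fin.last m)) b := by
    intro m c b
    rw [Fin.sum_univ_castSucc]
    congr 1
    · apply Finset.sum_congr rfl
      intro i _
      rw [Fin.succ_castSucc, Fin.snoc_castSucc, Fin.snoc_castSucc]
    · rw [Fin.snoc_castSucc, Fin.succ_last, Fin.snoc_last]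
  -- extension: x ∈ S a → x + l a b ∈ S b
  have hext : ∀ a b : V, ∀ x ∈ S a, x + l a b ∈ S b := by
    rintro a b x ⟨m, c, hc, hx⟩
    exact ⟨m + 1, Fin.snoc c b, by simp, by rw [hsnoc m c b, hc, hx]⟩
  -- uniform lower bound
  set M : ℝ := (Finset.univ : Finset (V × V)).sup' (by simp) (fun q => l q.1 q.2) with hM
  have hbdd : ∀ v, BddBelow (S v) := by
    intro v
    refine ⟨-M, ?_⟩
    rintro x ⟨m, c, hc, hx⟩
    have h0 : (Fin.snoc c (c 0) : Fin (m+2) → V) 0 = (Fin.snoc c (c 0) : Fin (m+2) → V) (Fin.last (m+1)) := by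
      have h1 := @Fin.snoc_castSucc (m+1) (fun _ => V) (c 0) c 0
      simp only [Fin.castSucc_zero] at h1
      have h2 : (Fin.snoc c (c 0) : Fin (m+2) → V) (Fin.last (m+1)) = c 0 := by simp
      rw [h1, h2]
    have hclose := hcyc (m + 1) (Fin.snoc c (c 0)) h0
    rw [hsnoc m c (c 0), hc, ← hx] at hclose
    have hle : l v (c 0) ≤ M :=
      Finset.le_sup' (fun q : V × V => l q.1 q.2) (Finset.mem_univ (v, c 0))
    linarith
  refine ⟨fun v => sInf (S v), ?_⟩
  intro a b
  have h2 : sInf (S b) - l a b ≤ sInf (S a) := le_csInf (hne a) fun x hx => by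
    have := csInf_le (hbdd b) (hext a b x hx); linarith
  simp only []
  linarith
end

section
/- In a complete digraph with nonnegative-length cycles, the function p(v) defined as the infimum over all vertices s and all directed paths from s to v of the path length is a valid potential: l(a,b) ≥ p(b) − p(a) for all a, b. -/
/-! Appending the edge `(a, b)` to a walk ending at `a` gives a walk ending at `b`, so
`p b ≤ p a + l a b` once the infima are known to be finite. They are: cutting a closed segment
out of a walk removes a cycle, which does not increase the weight, so by pigeonhole every walk
weighs at least as much as some walk with at most `|V|` edges. -/

open Finset

section

variable {V : Type*} (l : V → V → ℝ)

def walkWeight (c : ℕ → V) (m : ℕ) : ℝ :=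
  ∑ i ∈ range m, l (c i) (c (i + 1))

def NonnegCycles : Prop :=
  ∀ (c : ℕ → V) (m : ℕ), c 0 = c m → 0 ≤ walkWeight l c m

def walkWeightsTo (v : V) : Set ℝ :=
  {x | ∃ (m : ℕ) (c : Fin (m + 1) → V),
    c (Fin.last m) = v ∧ x = ∑ i : Fin m, l (c i.castSucc) (c i.succ)}

variable {l}

theorem walkWeight_add (c : ℕ → V) (a n : ℕ) :
    walkWeight l c (a + n) = walkWeight l c a + walkWeight l (fun t => c (a + t)) n := by
  simp only [walkWeight, sum_range_add, add_assoc]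

theorem walkWeight_congr {c c' : ℕ → V} {m : ℕ} (h : ∀ i ≤ m, c i = c' i) :
    walkWeight l c m = walkWeight l c' m :=
  sum_congr rfl fun i hi => by
    have hi : i < m := mem_range.1 hi
    rw [h i hi.le, h (i + 1) hi]

theorem mul_le_walkWeight {L : ℝ} (hL : ∀ u v, L ≤ l u v) (c : ℕ → V) (m : ℕ) :
    m * L ≤ walkWeight l c m := by
  simpa [walkWeight] using card_nsmul_le_sum (range m) _ L fun i _ => hL (c i) (c (i + 1))

theorem sum_fin_eq_walkWeight (m : ℕ) (c : ℕ → V) :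
    ∑ i : Fin m, l (c i) (c (i + 1)) = walkWeight l c m :=
  Fin.sum_univ_eq_sum_range (fun i => l (c i) (c (i + 1))) m

theorem NonnegCycles.of_fin
    (h : ∀ (m : ℕ) (c : Fin (m + 1) → V), c 0 = c (Fin.last m) →
      0 ≤ ∑ i : Fin m, l (c i.castSucc) (c i.succ)) :
    NonnegCycles l := fun c m hc => by
  simpa [sum_fin_eq_walkWeight] using h m (fun i => c i) (by simpa using hc)

theorem sum_fin_eq_walkWeight_clamp {m : ℕ} (c : Fin (m + 1) → V) :
    ∑ i : Fin m, l (c i.castSucc) (c i.succ) = walkWeight l (fun n => c (Fin.clamp n m)) m := by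
  rw [← sum_fin_eq_walkWeight]
  refine sum_congr rfl fun i _ => ?_
  congr <;> ext <;> simp [Fin.clamp, i.isLt.le, Nat.succ_le_of_lt i.isLt]

theorem exists_walkWeight_le_of_cycle (hl : NonnegCycles l) {c : ℕ → V} {a k : ℕ}
    (hc : c a = c (a + k)) (r : ℕ) :
    ∃ c' : ℕ → V, walkWeight l c' (a + r) ≤ walkWeight l c (a + k + r) := by
  -- `c'` skips the closed segment `c a, …, c (a + k)`
  set c' : ℕ → V := fun n => if n ≤ a then c n else c (n + k)
  have hhead : walkWeight l c' a = walkWeight l c a := walkWeight_congr fun i hi => if_pos hi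
  have htail : (fun t => c' (a + t)) = fun t => c (a + k + t) := by
    ext (_ | t)
    · simpa [c'] using hc
    · simp only [c', if_neg (by omega : ¬a + (t + 1) ≤ a)]
      congr 1
      omega
  have hcycle : 0 ≤ walkWeight l (fun t => c (a + t)) k := hl _ k (by simpa using hc)
  refine ⟨c', ?_⟩
  rw [walkWeight_add, walkWeight_add, walkWeight_add, hhead, htail]
  linarith

theorem exists_cycle_of_card_lt [Fintype V] {m : ℕ} (c : ℕ → V) (hm : Fintype.card V < m + 1) :
    ∃ a k r : ℕ, 0 < k ∧ a + k + r = m ∧ c a = c (a + k) := by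
  obtain ⟨i, j, hne, hij⟩ :=
    Fintype.exists_ne_map_eq_of_card_lt (fun i : Fin (m + 1) => c i) (by simpa using hm)
  wlog hlt : i < j generalizing i j
  · exact this j i hne.symm hij.symm (lt_of_le_of_ne (not_lt.1 hlt) hne.symm)
  refine ⟨i, j - i, m - j, by omega, by omega, ?_⟩
  rwa [Nat.add_sub_cancel' (Fin.lt_def.1 hlt).le]

theorem exists_forall_le_walkWeight [Fintype V] (hl : NonnegCycles l) :
    ∃ B, ∀ c m, B ≤ walkWeight l c m := by
  obtain ⟨L, hL⟩ := (Set.finite_range fun e : V × V => l e.1 e.2).bddBelow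
  have hedge : ∀ u v, min L 0 ≤ l u v := fun u v => (min_le_left _ _).trans (hL ⟨(u, v), rfl⟩)
  refine ⟨Fintype.card V * min L 0, fun c m => ?_⟩
  induction m using Nat.strong_induction_on generalizing c with
  | _ m ih =>
    by_cases hm : m ≤ Fintype.card V
    · calc (Fintype.card V : ℝ) * min L 0 ≤ m * min L 0 :=
            mul_le_mul_of_nonpos_right (by exact_mod_cast hm) (min_le_right _ _)
        _ ≤ walkWeight l c m := mul_le_walkWeight hedge c m
    · obtain ⟨a, k, r, hk, rfl, hc⟩ := exists_cycle_of_card_lt (m := m) c (by omega)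
      obtain ⟨c', hc'⟩ := exists_walkWeight_le_of_cycle hl hc r
      exact (ih (a + r) (by omega) c').trans hc'

theorem zero_mem_walkWeightsTo (v : V) : (0 : ℝ) ∈ walkWeightsTo l v :=
  ⟨0, fun _ => v, rfl, by simp⟩

theorem add_mem_walkWeightsTo {a : V} {x : ℝ} (hx : x ∈ walkWeightsTo l a) (b : V) :
    x + l a b ∈ walkWeightsTo l b := by
  obtain ⟨m, c, rfl, rfl⟩ := hx
  refine ⟨m + 1, Fin.snoc c b, by simp, ?_⟩
  simp [Fin.sum_univ_castSucc, Fin.succ_castSucc, -Fin.castSucc_succ]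

theorem bddBelow_walkWeightsTo [Fintype V] (hl : NonnegCycles l) (v : V) :
    BddBelow (walkWeightsTo l v) := by
  obtain ⟨B, hB⟩ := exists_forall_le_walkWeight hl
  exact ⟨B, by rintro _ ⟨m, c, -, rfl⟩; exact (sum_fin_eq_walkWeight_clamp c).symm ▸ hB _ m⟩

end

theorem csInf_le_csInf_add {α : Type*} [ConditionallyCompleteLattice α] [AddGroup α]
    [AddRightMono α] {S T : Set α} {d : α} (hS : S.Nonempty) (hT : BddBelow T)
    (h : ∀ x ∈ S, x + d ∈ T) : sInf T ≤ sInf S + d := by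
  rw [← sub_le_iff_le_add]
  exact le_csInf hS fun x hx => sub_le_iff_le_add.2 (csInf_le hT (h x hx))

theorem shortest_path_is_potential_general
    {V : Type*} [Fintype V] (l : V → V → ℝ)
    (hcyc : ∀ (m : ℕ) (c : Fin (m + 1) → V), c 0 = c (Fin.last m) →
      0 ≤ ∑ i : Fin m, l (c i.castSucc) (c i.succ))
    (p : V → ℝ)
    (hp : ∀ v : V, p v = sInf {x : ℝ | ∃ (m : ℕ) (c : Fin (m + 1) → V),
      c (Fin.last m) = v ∧ x = ∑ i : Fin m, l (c i.castSucc) (c i.succ)}) :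
    ∀ a b : V, p b - p a ≤ l a b := by
  intro a b
  have hp' : ∀ v, p v = sInf (walkWeightsTo l v) := hp
  rw [hp', hp', sub_le_iff_le_add']
  exact csInf_le_csInf_add ⟨0, zero_mem_walkWeightsTo a⟩
    (bddBelow_walkWeightsTo (NonnegCycles.of_fin hcyc) b) fun x hx => add_mem_walkWeightsTo hx b

theorem shortest_path_is_potential
    {V : Type*} [Fintype V] [Nonempty V] (l : V → V → ℝ)
    (hcyc : ∀ (m : ℕ) (c : Fin (m + 1) → V), c 0 = c (Fin.last m) →
      0 ≤ ∑ i : Fin m, l (c i.castSucc) (c i.succ))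
    (p : V → ℝ)
    (hp : ∀ v : V, p v = sInf {x : ℝ | ∃ (m : ℕ) (c : Fin (m + 1) → V),
      c (Fin.last m) = v ∧ x = ∑ i : Fin m, l (c i.castSucc) (c i.succ)}) :
    ∀ a b : V, p b - p a ≤ l a b :=
  shortest_path_is_potential_general l hcyc p hp
end

section
/- In the K-user compound interference channel, for any fixed power exponent vector r ∈ ℝ^K with r_k ≤ 0, the GDoF value achieved by user k under TIN in the compound channel equals the GDoF value achieved by user k under TIN with the same power vector in the regular counterpart channel. That is, for every k: max{0, min over states l_k of [α_{kk}^{[l_k]} + r_k − max_{j≠k}{0, α_{kj}^{[l_k]} + r_j}]} = max{0, ᾱ_{kk} + r_k − max_{j≠k}{0, ᾱ_{kj} + r_j}}, where ᾱ_{kk} = min_{l_k} α_{kk}^{[l_k]} and ᾱ_{kj} = ᾱ_{kk} − min_{l_k}(α_{kk}^{[l_k]} − α_{kj}^{[l_k]}) for j ≠ k. -/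
/-!
Both sides equal the largest `x` with `x - r k ≤ ᾱ k k` and `x - r k + r j ≤ min_l (α k l k - α k l j)`
for every interferer `j ≠ k`. Indeed, `x` lies below a TIN rate exactly when it satisfies one linear
constraint for the desired signal and one for each interferer, and in the compound channel each of
these constraints must hold in every state, i.e. for the minimum over the states.
-/

theorem Finite.le_ciInf_iff {σ α : Type*} [ConditionallyCompleteLattice α] [Finite σ] [Nonempty σ]
    {f : σ → α} {x : α} : x ≤ ⨅ l, f l ↔ ∀ l, x ≤ f l :=
  _root_.le_ciInf_iff (Finite.bddBelow_range f)

/-- Over a finite index type, `⨆ j ∈ s, f j` is `0` on `j ∉ s`, which the outer `max 0` absorbs. -/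
theorem max_zero_biSup_le_iff {ι : Type*} [Finite ι] (s : Finset ι) (f : ι → ℝ) {y : ℝ} :
    max 0 (⨆ j ∈ s, f j) ≤ y ↔ 0 ≤ y ∧ ∀ j ∈ s, f j ≤ y := by
  rw [max_le_iff]
  refine and_congr_right fun hy => ⟨fun h j hj => ?_, fun h => ?_⟩
  · calc f j = ⨆ _ : j ∈ s, f j := (ciSup_pos (f := fun _ => f j) hj).symm
      _ ≤ ⨆ j ∈ s, f j := le_ciSup (f := fun j => ⨆ _ : j ∈ s, f j) (Finite.bddAbove_range _) j
      _ ≤ y := h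
  · exact Real.iSup_le (fun j => Real.iSup_le (h j) hy) hy

theorem le_sub_max_zero_biSup_iff {ι : Type*} [Finite ι] (s : Finset ι) (f : ι → ℝ) {a x : ℝ} :
    x ≤ a - max 0 (⨆ j ∈ s, f j) ↔ x ≤ a ∧ ∀ j ∈ s, f j ≤ a - x := by
  rw [le_sub_comm, max_zero_biSup_le_iff, sub_nonneg]

theorem compound_regular_same_tin_gdof_general
    (K : ℕ) (S : Fin K → Type) [∀ k, Fintype (S k)] [∀ k, Nonempty (S k)]
    (α : (k : Fin K) → S k → Fin K → ℝ)
    (r : Fin K → ℝ)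
    (ᾱ : Fin K → Fin K → ℝ)
    (hdiag : ∀ k, ᾱ k k = ⨅ l : S k, α k l k)
    (hoff : ∀ k j, j ≠ k →
      ᾱ k j = (⨅ l : S k, α k l k) - ⨅ l : S k, (α k l k - α k l j)) :
    ∀ k : Fin K,
      max 0 (⨅ l : S k, (α k l k + r k -
          max 0 (⨆ j ∈ Finset.univ.erase k, (α k l j + r j)))) =
      max 0 (ᾱ k k + r k -
          max 0 (⨆ j ∈ Finset.univ.erase k, (ᾱ k j + r j))) := by
  intro k
  congr 1
  refine eq_of_forall_le_iff fun x => ?_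
  set s := Finset.univ.erase k
  let C := x - r k ≤ ⨅ l, α k l k ∧ ∀ j ∈ s, x - r k + r j ≤ ⨅ l, (α k l k - α k l j)
  have compound : (x ≤ ⨅ l, (α k l k + r k - max 0 (⨆ j ∈ s, (α k l j + r j)))) ↔ C := by
    simp only [C, Finite.le_ciInf_iff, le_sub_max_zero_biSup_iff, forall_and]
    refine and_congr (forall_congr' fun l => sub_le_iff_le_add.symm) ?_
    exact ⟨fun h j hj l => by linarith [h l j hj], fun h l j hj => by linarith [h j hj l]⟩
  have regular : (x ≤ ᾱ k k + r k - max 0 (⨆ j ∈ s, (ᾱ k j + r j))) ↔ C := by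
    rw [le_sub_max_zero_biSup_iff, hdiag]
    refine and_congr sub_le_iff_le_add.symm (forall₂_congr fun j hj => ?_)
    rw [hoff k j (Finset.ne_of_mem_erase hj)]
    constructor <;> intro h <;> linarith
  rw [compound, regular]

theorem compound_regular_same_tin_gdof
    (K : ℕ) (hK : 1 ≤ K) (S : Fin K → Type) [∀ k, Fintype (S k)] [∀ k, Nonempty (S k)]
    (α : (k : Fin K) → S k → Fin K → ℝ)
    (r : Fin K → ℝ) (hr : ∀ k, r k ≤ 0)
    (ᾱ : Fin K → Fin K → ℝ)
    (hdiag : ∀ k, ᾱ k k = ⨅ l : S k, α k l k)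
    (hoff : ∀ k j, j ≠ k →
      ᾱ k j = (⨅ l : S k, α k l k) - ⨅ l : S k, (α k l k - α k l j)) :
    ∀ k : Fin K,
      max 0 (⨅ l : S k, (α k l k + r k -
          max 0 (⨆ j ∈ Finset.univ.erase k, (α k l j + r j)))) =
      max 0 (ᾱ k k + r k -
          max 0 (⨆ j ∈ Finset.univ.erase k, (ᾱ k j + r j))) :=
  compound_regular_same_tin_gdof_general K S α r ᾱ hdiag hoff
end

section
/- If the K-user compound interference channel satisfies the TIN-optimality condition α_{ii}^{[l_i]} ≥ max_{j≠i} α_{ji}^{[l_j]} + max_{k≠i} α_{ik}^{[l_i]} for all users i and all states, then its regular counterpart satisfies ᾱ_{kk} ≥ max_{j≠k} ᾱ_{kj} + max_{i≠k} ᾱ_{ik} for all k; i.e., the regular counterpart is also TIN-optimal. -/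
theorem regular_counterpart_tin_optimal
    (K : ℕ) (S : Fin K → Type) [∀ k, Fintype (S k)] [∀ k, Nonempty (S k)]
    (α : (k : Fin K) → S k → Fin K → ℝ)
    (hpos : ∀ (k : Fin K) (l : S k) (j : Fin K), 0 ≤ α k l j)
    (ᾱ : Fin K → Fin K → ℝ)
    (hdiag : ∀ k, ᾱ k k = ⨅ l : S k, α k l k)
    (hoff : ∀ k j, j ≠ k →
      ᾱ k j = (⨅ l : S k, α k l k) - ⨅ l : S k, (α k l k - α k l j))
    (hTIN : ∀ (i : Fin K) (li : S i) (j : Fin K) (lj : S j) (k : Fin K),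
      j ≠ i → k ≠ i → α j lj i + α i li k ≤ α i li i) :
    ∀ (k i j : Fin K), j ≠ k → i ≠ k → ᾱ k j + ᾱ i k ≤ ᾱ k k := by
  intro k i j hj hi
  -- minimizer of l ↦ α i l i - α i l k
  obtain ⟨ls, hls⟩ := Finite.exists_min (fun l : S i => α i l i - α i l k)
  have hBdd : ∀ (m : Fin K) (f : S m → ℝ), BddBelow (Set.range f) := fun m f =>
    Set.Finite.bddBelow (Set.finite_range f)
  have hik : ᾱ i k ≤ α i ls k := by
    rw [hoff i k hi.symm]
    have h1 : (⨅ l : S i, α i l i) ≤ α i ls i := ciInf_le (hBdd i _) ls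
    have h2 : (⨅ l : S i, (α i l i - α i l k)) = α i ls i - α i ls k :=
      le_antisymm (ciInf_le (hBdd i _) ls) (le_ciInf hls)
    rw [h2]; linarith
  have key : ᾱ i k ≤ ⨅ l : S k, (α k l k - α k l j) := by
    refine le_ciInf fun l => ?_
    have := hTIN k l i ls j hi hj
    linarith
  rw [hoff k j hj, hdiag k]
  linarith
end

section
/- For a 2-user (regular, single-state) interference channel with nonnegative strength levels α_{11}, α_{12}, α_{21}, α_{22} satisfying α_{11} ≥ α_{12} + α_{21} and α_{22} ≥ α_{12} + α_{21}, the polyhedral TIN region equals the set of (d_1, d_2) with 0 ≤ d_1 ≤ α_{11}, 0 ≤ d_2 ≤ α_{22}, and d_1 + d_2 ≤ α_{11} + α_{22} − α_{12} − α_{21}. Specifically, (d_1,d_2) belongs to this set if and only if there exist r_1, r_2 ≤ 0 with d_1 ≤ α_{11} + r_1, d_1 ≤ (α_{11} − α_{12}) + (r_1 − r_2), d_2 ≤ α_{22} + r_2, and d_2 ≤ (α_{22} − α_{21}) + (r_2 − r_1). -/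
theorem two_user_polyhedral_tin_region
    (a11 a12 a21 a22 d1 d2 : ℝ)
    (h11 : 0 ≤ a11) (h12 : 0 ≤ a12) (h21 : 0 ≤ a21) (h22 : 0 ≤ a22)
    (hd1 : 0 ≤ d1) (hd2 : 0 ≤ d2)
    (hTIN1 : a12 + a21 ≤ a11) (hTIN2 : a12 + a21 ≤ a22) :
    (∃ r1 r2 : ℝ, r1 ≤ 0 ∧ r2 ≤ 0 ∧
        d1 ≤ a11 + r1 ∧ d1 ≤ (a11 - a12) + (r1 - r2) ∧
        d2 ≤ a22 + r2 ∧ d2 ≤ (a22 - a21) + (r2 - r1)) ↔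
      (d1 ≤ a11 ∧ d2 ≤ a22 ∧ d1 + d2 ≤ a11 + a22 - a12 - a21) := by
  constructor
  · rintro ⟨r1, r2, h1, h2, h3, h4, h5, h6⟩
    exact ⟨by linarith, by linarith, by linarith⟩
  · rintro ⟨g1, g2, g3⟩
    by_cases h : d1 + a12 ≤ a11
    · exact ⟨d1 - a11 + a12, 0, by linarith, le_refl 0, by linarith, by linarith,
        by linarith, by linarith⟩
    · exact ⟨0, a11 - a12 - d1, le_refl 0, by linarith, by linarith, by linarith,
        by linarith, by linarith⟩
end

section
/- For the 2-user compound interference channel with user 1 having two states and user 2 one state, with nonnegative levels α_{11}^{[1]}, α_{12}^{[1]}, α_{11}^{[2]}, α_{12}^{[2]} (states of receiver 1) and α_{21}, α_{22} (receiver 2), a pair (d_1, d_2) with d_1, d_2 ≥ 0 is in the polyhedral TIN region (i.e., there exist r_1, r_2 ≤ 0 with d_1 ≤ α_{11}^{[l]} + r_1 and d_1 ≤ (α_{11}^{[l]} − α_{12}^{[l]}) + r_1 − r_2 for l = 1,2, and d_2 ≤ α_{22} + r_2 and d_2 ≤ (α_{22} − α_{21}) + r_2 − r_1) if and only if d_1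 ≤ min{α_{11}^{[1]}, α_{11}^{[2]}}, d_2 ≤ α_{22}, d_1 + d_2 ≤ α_{11}^{[1]} + α_{22} − α_{21} − α_{12}^{[1]}, and d_1 + d_2 ≤ α_{11}^{[2]} + α_{22} − α_{21} − α_{12}^{[2]}. -/
theorem two_user_compound_polyhedral_tin_region
    (a11₁ a12₁ a11₂ a12₂ a21 a22 d1 d2 : ℝ)
    (h1 : 0 ≤ a11₁) (h2 : 0 ≤ a12₁) (h3 : 0 ≤ a11₂) (h4 : 0 ≤ a12₂)
    (h5 : 0 ≤ a21) (h6 : 0 ≤ a22)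
    (hd1 : 0 ≤ d1) (hd2 : 0 ≤ d2) :
    (∃ r1 r2 : ℝ, r1 ≤ 0 ∧ r2 ≤ 0 ∧
        d1 ≤ a11₁ + r1 ∧ d1 ≤ (a11₁ - a12₁) + (r1 - r2) ∧
        d1 ≤ a11₂ + r1 ∧ d1 ≤ (a11₂ - a12₂) + (r1 - r2) ∧
        d2 ≤ a22 + r2 ∧ d2 ≤ (a22 - a21) + (r2 - r1)) ↔
      (d1 ≤ min a11₁ a11₂ ∧ d2 ≤ a22 ∧
        d1 + d2 ≤ a11₁ + a22 - a21 - a12₁ ∧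
        d1 + d2 ≤ a11₂ + a22 - a21 - a12₂) := by
  constructor
  · rintro ⟨r1, r2, hr1, hr2, c1, c2, c3, c4, c5, c6⟩
    exact ⟨le_min (by linarith) (by linarith), by linarith, by linarith, by linarith⟩
  · rintro ⟨hm, hb, hs1, hs2⟩
    have hm1 : d1 ≤ a11₁ := le_trans hm (min_le_left _ _)
    have hm2 : d1 ≤ a11₂ := le_trans hm (min_le_right _ _)
    set r2 : ℝ := max (d2 - a22) (max (d1 + d2 - a11₁ - a22 + a21) (d1 + d2 - a11₂ - a22 + a21)) with hr2def
    have h5' : d2 - a22 ≤ r2 := le_max_left _ _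
    have hA1 : d1 + d2 - a11₁ - a22 + a21 ≤ r2 := le_trans (le_max_left _ _) (le_max_right _ _)
    have hA2 : d1 + d2 - a11₂ - a22 + a21 ≤ r2 := le_trans (le_max_right _ _) (le_max_right _ _)
    have hr2le : r2 ≤ 0 := max_le (by linarith) (max_le (by linarith) (by linarith))
    have hB1 : r2 ≤ a11₁ - a12₁ - d1 := max_le (by linarith) (max_le (by linarith) (by linarith))
    have hB2 : r2 ≤ a11₂ - a12₂ - d1 := max_le (by linarith) (max_le (by linarith) (by linarith))
    set r1 : ℝ := min 0 (r2 - d2 + a22 - a21) with hr1def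
    have hr1le : r1 ≤ 0 := min_le_left _ _
    have h6' : r1 ≤ r2 - d2 + a22 - a21 := min_le_right _ _
    have hL1 : d1 - a11₁ ≤ r1 := le_min (by linarith) (by linarith)
    have hL2 : d1 - a11₂ ≤ r1 := le_min (by linarith) (by linarith)
    have hL3 : d1 - a11₁ + a12₁ + r2 ≤ r1 := le_min (by linarith) (by linarith)
    have hL4 : d1 - a11₂ + a12₂ + r2 ≤ r1 := le_min (by linarith) (by linarith)
    exact ⟨r1, r2, hr1le, hr2le, by linarith, by linarith, by linarith, by linarith,
      by linarith, by linarith⟩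
end

section
/- In a K-user regular interference channel, for any GDoF tuple (d_1,...,d_K) with all d_k ≥ 0 in the polyhedral TIN region, the shortest-path power allocation r_k = l_{k,dst} (the length of the shortest path from the auxiliary vertex u to vertex v_k in the potential graph) satisfies r_k ≤ 0 for all k, and the resulting TIN GDoF tuple dominates the target: for every k, max{0, α_{kk} + r_k − max_{j≠k}{0, α_{kj} + r_j}} ≥ d_k. -/
theorem shortest_path_power_allocation_dominates
    (K : ℕ) (α : Fin K → Fin K → ℝ) (d : Fin K → ℝ) (hd : ∀ k, 0 ≤ d k)
    (len : (Fin K ⊕ Unit) → (Fin K ⊕ Unit) → ℝ)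
    (hlen0 : ∀ v, len v v = 0)
    (hlen1 : ∀ k j : Fin K, k ≠ j → len (.inl k) (.inl j) = (α k k - α k j) - d k)
    (hlen2 : ∀ k : Fin K, len (.inl k) (.inr ()) = α k k - d k)
    (hlen3 : ∀ k : Fin K, len (.inr ()) (.inl k) = 0)
    (hcyc : ∀ (m : ℕ) (c : Fin (m + 1) → (Fin K ⊕ Unit)), c 0 = c (Fin.last m) →
      0 ≤ ∑ i : Fin m, len (c i.castSucc) (c i.succ))
    (r : Fin K → ℝ)
    (hr : ∀ k : Fin K, r k = sInf {x : ℝ | ∃ (m : ℕ) (c : Fin (m + 1) → (Fin K ⊕ Unit)),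
      c 0 = .inr () ∧ c (Fin.last m) = .inl k ∧
      x = ∑ i : Fin m, len (c i.castSucc) (c i.succ)}) :
    ∀ k : Fin K, r k ≤ 0 ∧
      d k ≤ max 0 (α k k + r k -
        max 0 (⨆ j ∈ Finset.univ.erase k, (α k j + r j))) := by
  intro k
  let S : (Fin K ⊕ Unit) → Set ℝ := fun t => {x : ℝ |
      ∃ (m : ℕ) (c : Fin (m + 1) → (Fin K ⊕ Unit)),
      c 0 = .inr () ∧ c (Fin.last m) = t ∧
      x = ∑ i : Fin m, len (c i.castSucc) (c i.succ)}
  have hext : ∀ (t t' : (Fin K ⊕ Unit)) (x : ℝ), x ∈ S t → x + len t t' ∈ S t' := by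
    rintro t t' x ⟨m, c, h0, hl, hx⟩
    refine ⟨m + 1, Fin.snoc c t', ?_, ?_, ?_⟩
    · rw [show (0 : Fin (m + 2)) = Fin.castSucc 0 by rfl, Fin.snoc_castSucc]
      exact h0
    · simp [Fin.snoc_last]
    · rw [Fin.sum_univ_castSucc]
      simp only [Fin.succ_castSucc, Fin.snoc_castSucc, Fin.succ_last, Fin.snoc_last]
      rw [hx, hl]
  have h0mem : ∀ k' : Fin K, (0 : ℝ) ∈ S (.inl k') := by
    intro k'
    have base : (0 : ℝ) ∈ S (.inr ()) := ⟨0, fun _ => .inr (), rfl, rfl, by simp⟩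
    have h := hext _ (.inl k') 0 base
    rwa [hlen3, zero_add] at h
  have hcycle : ∀ (t : (Fin K ⊕ Unit)) (x : ℝ), x ∈ S t → 0 ≤ x + len t (.inr ()) := by
    rintro t x hx
    obtain ⟨m, c, h0, hl, hs⟩ := hext t (.inr ()) x hx
    have h := hcyc m c (by rw [h0, hl])
    rwa [← hs] at h
  have hbdd : ∀ k' : Fin K, d k' - α k' k' ∈ lowerBounds (S (.inl k')) := by
    intro k' x hx
    have h := hcycle (.inl k') x hx
    rw [hlen2] at h
    linarith
  have hbddB : ∀ k', BddBelow (S (.inl k')) := fun k' => ⟨_, hbdd k'⟩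
  have hle0 : ∀ k', r k' ≤ 0 := fun k' => by
    rw [hr k']; exact csInf_le (hbddB k') (h0mem k')
  have hlow : ∀ k', d k' - α k' k' ≤ r k' := fun k' => by
    rw [hr k']; exact le_csInf ⟨0, h0mem k'⟩ (hbdd k')
  have htri : ∀ j : Fin K, j ≠ k → α k j + r j ≤ α k k + r k - d k := by
    intro j hj
    have h1 : ∀ x ∈ S (.inl k), r j ≤ x + ((α k k - α k j) - d k) := by
      intro x hx
      have h := hext (.inl k) (.inl j) x hx
      rw [hlen1 k j (Ne.symm hj)] at h
      rw [hr j]; exact csInf_le (hbddB j) h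
    have h2 : r j - ((α k k - α k j) - d k) ≤ r k := by
      rw [hr k]
      exact le_csInf ⟨0, h0mem k⟩ (fun x hx => by linarith [h1 x hx])
    linarith
  refine ⟨hle0 k, ?_⟩
  have hdk : d k ≤ α k k + r k := by linarith [hlow k]
  have hnn : (0 : ℝ) ≤ α k k + r k - d k := by linarith
  have hsup : (⨆ j ∈ Finset.univ.erase k, (α k j + r j)) ≤ α k k + r k - d k := by
    refine Real.iSup_le (fun j => Real.iSup_le (fun hjm => ?_) hnn) hnn
    exact htri j (Finset.ne_of_mem_erase hjm)
  have hmax : max 0 (⨆ j ∈ Finset.univ.erase k, (α k j + r j)) ≤ α k k + r k - d k :=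
    max_le hnn hsup
  have : d k ≤ α k k + r k - max 0 (⨆ j ∈ Finset.univ.erase k, (α k j + r j)) := by
    linarith
  exact le_trans this (le_max_right _ _)
end

section
/- If a GDoF tuple (d_1,...,d_K) with all d_k > 0 is achievable via the polyhedral TIN scheme in a K-user regular interference channel (i.e., all cycles of its potential graph have nonnegative length), then the shortest path length l_{k,dst} from u to v_k equals 0 for at least one k ∈ ⟨K⟩. -/
/-!
Call `x ≺ y` if some walk from `x` to `y` has negative length. This relation is transitive, and
irreflexive because every cycle is nonnegative, so on the finite vertex set it is well-founded;
let `v_k` be `≺`-minimal among the vertices other than `u`. A negative walk from `u` to `v_k`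
would begin with a stay at `u` (nonnegative loops) followed by an edge `u → v_j` of length `0`,
so dropping that beginning leaves a negative walk `v_j ≺ v_k`, contradicting minimality.
-/

variable {V α : Type*}

inductive WalkOfLength [Add α] [Zero α] (len : V → V → α) : V → V → α → Prop
  | nil (x : V) : WalkOfLength len x x 0
  | cons (x : V) {y z : V} {L : α} : WalkOfLength len y z L → WalkOfLength len x z (len x y + L)

namespace WalkOfLength

section AddCommMonoid

variable [AddCommMonoid α] {len : V → V → α}

theorem single (x y : V) : WalkOfLength len x y (len x y) := by
  simpa using (nil y).cons (len := len) x

theorem append {x y z : V} {a b : α} (h₁ : WalkOfLength len x y a)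
    (h₂ : WalkOfLength len y z b) : WalkOfLength len x z (a + b) := by
  induction h₁ with
  | nil => simpa using h₂
  | cons x _ ih => simpa only [add_assoc] using (ih h₂).cons x

theorem iff_exists_fin {x y : V} {L : α} :
    WalkOfLength len x y L ↔ ∃ (m : ℕ) (c : Fin (m + 1) → V), c 0 = x ∧ c (Fin.last m) = y ∧
      L = ∑ i : Fin m, len (c i.castSucc) (c i.succ) := by
  constructor
  · intro h
    induction h with
    | nil x => exact ⟨0, fun _ => x, rfl, rfl, by simp⟩
    | cons x _ ih =>
      obtain ⟨m, c, rfl, rfl, rfl⟩ := ih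
      exact ⟨m + 1, Fin.cons x c, rfl, by simp [← Fin.succ_last],
        by simp [Fin.sum_univ_succ]⟩
  · rintro ⟨m, c, rfl, rfl, rfl⟩
    induction m with
    | zero => simpa using nil (c 0)
    | succ m ih =>
      rw [Fin.sum_univ_succ]
      simpa [Fin.tail, ← Fin.succ_castSucc] using (ih (Fin.tail c)).cons (c 0)

end AddCommMonoid

section LinearOrder

variable [AddCommMonoid α] [LinearOrder α] [IsOrderedCancelAddMonoid α] {len : V → V → α}

theorem exists_start_ne_le {u x : V} {L : α} (hu : ∀ y, 0 ≤ len u y)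
    (h : WalkOfLength len u x L) (hx : x ≠ u) :
    ∃ y ≠ u, ∃ L' ≤ L, WalkOfLength len y x L' := by
  induction h with
  | nil => exact absurd rfl hx
  | @cons u y x L h ih =>
    by_cases hy : y = u
    · subst hy
      obtain ⟨z, hz, L', hL', h'⟩ := ih hu hx
      exact ⟨z, hz, L', hL'.trans (le_add_of_nonneg_left (hu _)), h'⟩
    · exact ⟨y, hy, L, le_add_of_nonneg_left (hu y), h⟩

theorem exists_ne_forall_nonneg [Finite V] {u : V}
    (hcyc : ∀ x L, WalkOfLength len x x L → 0 ≤ L) (hu : ∀ y ≠ u, 0 ≤ len u y)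
    (hV : ∃ y, y ≠ u) :
    ∃ y ≠ u, ∀ L, WalkOfLength len u y L → 0 ≤ L := by
  by_contra! hneg
  let R : V → V → Prop := fun x y => ∃ L < 0, WalkOfLength len x y L
  have : IsTrans V R :=
    ⟨fun _ _ _ ⟨a, ha, hxy⟩ ⟨b, hb, hyz⟩ => ⟨a + b, add_neg ha hb, hxy.append hyz⟩⟩
  have : Std.Irrefl R := ⟨fun x ⟨L, hL, h⟩ => (hcyc x L h).not_gt hL⟩
  obtain ⟨a, ha, hmin⟩ := (Finite.wellFounded_of_trans_of_irrefl R).has_min {y | y ≠ u} hV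
  obtain ⟨L, h, hL⟩ := hneg a ha
  have hu' (y : V) : 0 ≤ len u y := by
    by_cases hy : y = u
    · subst hy; exact hcyc y _ (single y y)
    · exact hu y hy
  obtain ⟨y, hy, L', hL', h'⟩ := h.exists_start_ne_le hu' ha
  exact hmin y hy ⟨L', hL'.trans_lt hL, h'⟩

end LinearOrder

end WalkOfLength

theorem some_user_full_power_general
    (K : ℕ) (hK : 1 ≤ K)
    (len : (Fin K ⊕ Unit) → (Fin K ⊕ Unit) → ℝ)
    (hlen3 : ∀ k : Fin K, len (.inr ()) (.inl k) = 0)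
    (hcyc : ∀ (m : ℕ) (c : Fin (m + 1) → (Fin K ⊕ Unit)), c 0 = c (Fin.last m) →
      0 ≤ ∑ i : Fin m, len (c i.castSucc) (c i.succ))
    (r : Fin K → ℝ)
    (hr : ∀ k : Fin K, r k = sInf {x : ℝ | ∃ (m : ℕ) (c : Fin (m + 1) → (Fin K ⊕ Unit)),
      c 0 = .inr () ∧ c (Fin.last m) = .inl k ∧
      x = ∑ i : Fin m, len (c i.castSucc) (c i.succ)}) :
    ∃ k : Fin K, r k = 0 := by
  have hcyc' : ∀ x L, WalkOfLength len x x L → 0 ≤ L := fun x L h => by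
    obtain ⟨m, c, h0, hm, rfl⟩ := WalkOfLength.iff_exists_fin.mp h
    exact hcyc m c (h0.trans hm.symm)
  have hu : ∀ y ≠ .inr (), 0 ≤ len (.inr ()) y
    | .inl k, _ => (hlen3 k).ge
    | .inr (), hy => absurd rfl hy
  obtain ⟨y, hy, hmin⟩ := WalkOfLength.exists_ne_forall_nonneg hcyc' hu
    ⟨.inl ⟨0, hK⟩, Sum.inl_ne_inr⟩
  obtain ⟨k, rfl⟩ : ∃ k, y = .inl k := by cases y <;> simp_all
  refine ⟨k, (hr k).trans (IsLeast.csInf_eq ⟨?_, ?_⟩)⟩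
  · exact WalkOfLength.iff_exists_fin.mp (hlen3 k ▸ WalkOfLength.single _ _)
  · rintro x ⟨m, c, h0, hm, rfl⟩
    exact hmin _ (WalkOfLength.iff_exists_fin.mpr ⟨m, c, h0, hm, rfl⟩)

theorem some_user_full_power
    (K : ℕ) (hK : 1 ≤ K) (α : Fin K → Fin K → ℝ) (d : Fin K → ℝ) (hd : ∀ k, 0 < d k)
    (len : (Fin K ⊕ Unit) → (Fin K ⊕ Unit) → ℝ)
    (hlen0 : ∀ v, len v v = 0)
    (hlen1 : ∀ k j : Fin K, k ≠ j → len (.inl k) (.inl j) = (α k k - α k j) - d k)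
    (hlen2 : ∀ k : Fin K, len (.inl k) (.inr ()) = α k k - d k)
    (hlen3 : ∀ k : Fin K, len (.inr ()) (.inl k) = 0)
    (hcyc : ∀ (m : ℕ) (c : Fin (m + 1) → (Fin K ⊕ Unit)), c 0 = c (Fin.last m) →
      0 ≤ ∑ i : Fin m, len (c i.castSucc) (c i.succ))
    (r : Fin K → ℝ)
    (hr : ∀ k : Fin K, r k = sInf {x : ℝ | ∃ (m : ℕ) (c : Fin (m + 1) → (Fin K ⊕ Unit)),
      c 0 = .inr () ∧ c (Fin.last m) = .inl k ∧
      x = ∑ i : Fin m, len (c i.castSucc) (c i.succ)}) :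
    ∃ k : Fin K, r k = 0 :=
  some_user_full_power_general K hK len hlen3 hcyc r hr
end

section
/- If in a K-user regular interference channel a power vector r with r ≤ 0 achieves GDoF tuple (d_1,...,d_K) with all d_k > 0 under polyhedral TIN (i.e., d_k = α_{kk} + r_k − max_{j≠k}{0, α_{kj} + r_j} for all k), then uniform power reduction by any Δ with 0 ≤ Δ ≤ min_k (r_k + α_{kk} − d_k) yields a power vector r − Δ·1 whose polyhedral-TIN GDoF tuple dominates (d_1,...,d_K): for every k, α_{kk} + r_k − Δ − max_{j≠k}{0, α_{kj} + r_j − Δ} ≥ d_k. -/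
theorem uniform_power_reduction
    (K : ℕ) (hK : 1 ≤ K) (α : Fin K → Fin K → ℝ) (r : Fin K → ℝ)
    (hr : ∀ k, r k ≤ 0) (d : Fin K → ℝ)
    (hd : ∀ k : Fin K,
      d k = α k k + r k - max 0 (⨆ j ∈ Finset.univ.erase k, (α k j + r j)))
    (hdpos : ∀ k, 0 < d k)
    (Δ : ℝ) (hΔ0 : 0 ≤ Δ) (hΔ : ∀ k : Fin K, Δ ≤ r k + α k k - d k) :
    ∀ k : Fin K,
      d k ≤ α k k + r k - Δ -
        max 0 (⨆ j ∈ Finset.univ.erase k, (α k j + r j - Δ)) := by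
  intro k
  set M : ℝ := max 0 (⨆ j ∈ Finset.univ.erase k, (α k j + r j)) with hM
  have hΔM : Δ ≤ M := by
    have := hΔ k
    have := hd k
    linarith
  have hle : ∀ j ∈ Finset.univ.erase k, α k j + r j ≤ M := by
    intro j hj
    have h1 : α k j + r j = ⨆ _ : j ∈ Finset.univ.erase k, (α k j + r j) :=
      (ciSup_pos (f := fun _ => α k j + r j) hj).symm
    have h2 : (⨆ _ : j ∈ Finset.univ.erase k, (α k j + r j)) ≤
        ⨆ j ∈ Finset.univ.erase k, (α k j + r j) :=
      le_ciSup (f := fun j => ⨆ _ : j ∈ Finset.univ.erase k, (α k j + r j)) (Set.Finite.bddAbove (Set.finite_range _)) j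
    calc α k j + r j = _ := h1
      _ ≤ ⨆ j ∈ Finset.univ.erase k, (α k j + r j) := h2
      _ ≤ M := le_max_right _ _
  have hkey : max 0 (⨆ j ∈ Finset.univ.erase k, (α k j + r j - Δ)) ≤ M - Δ := by
    apply max_le (by linarith)
    apply Real.iSup_le _ (by linarith)
    intro j
    apply Real.iSup_le _ (by linarith)
    intro hj
    have := hle j hj
    linarith
  have := hd k
  linarith
end
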